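/- Let G be a finite group and let μ ∈ P(G) satisfy μ(g) > 0 for every g ∈ G. Then as t → 1⁻, Q_t(μ) converges to the uniform probability measure (1/|G|) Σ_{g∈G} δ_g; equivalently, the ω-limit set of the orbit of μ under Q_t is the single point (1/|G|) Σ_{g∈G} δ_g, the main attractor of the rational semigroup. -/

import Mathlib

open Filter

/-- The rational map `Q_t(μ) = (1-t) μ (1 - tμ)⁻¹` in the group algebra `ℝ[G]`. -/
noncomputable def Q {G : Type*} [CommGroup G] (t : ℝ) (μ : MonoidAlgebra ℝ G) :
    MonoidAlgebra ℝ G :=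
  (1 - t) • (μ * Ring.inverse (1 - t • μ))

/-! Write `u` for the uniform measure. Since `μ u = u`, we have `Q_t(μ) - u = (1 - t) z_t` with
`z_t = (μ - u)(1 - tμ)⁻¹`, an element of mass zero solving `z_t = (μ - u) + t μ z_t`.
If `μ ≥ m > 0` pointwise, convolution by `μ` agrees on mass-zero elements with convolution by
`μ - m |G| u ≥ 0`, so it contracts their `ℓ¹` norm by the factor `1 - |G| m < 1`. Hence
`‖z_t‖₁ ≤ ‖μ - u‖₁ / (|G| m)` uniformly in `t`, and `Q_t(μ) → u` at rate `O(1 - t)`. -/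

namespace MonoidAlgebra

open Finset

section Fintype

variable {G : Type*} [Fintype G]

noncomputable def l1Norm (a : MonoidAlgebra ℝ G) : ℝ := ∑ g : G, |a.coeff g|

lemma l1Norm_nonneg (a : MonoidAlgebra ℝ G) : 0 ≤ l1Norm a :=
  sum_nonneg fun _ _ => abs_nonneg _

lemma abs_coeff_le_l1Norm (a : MonoidAlgebra ℝ G) (x : G) : |a.coeff x| ≤ l1Norm a :=
  single_le_sum (f := fun g => |a.coeff g|) (fun _ _ => abs_nonneg _) (mem_univ x)

lemma l1Norm_eq_zero {a : MonoidAlgebra ℝ G} : l1Norm a = 0 ↔ a = 0 := by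
  refine ⟨fun h => ?_, fun h => by simp [h, l1Norm]⟩
  ext g
  simpa using (sum_eq_zero_iff_of_nonneg fun _ _ => abs_nonneg _).1 h g (mem_univ g)

lemma l1Norm_add_le (a b : MonoidAlgebra ℝ G) : l1Norm (a + b) ≤ l1Norm a + l1Norm b := by
  rw [l1Norm, l1Norm, l1Norm, ← sum_add_distrib]
  exact sum_le_sum fun g _ => by simpa using abs_add_le (a.coeff g) (b.coeff g)

lemma l1Norm_smul (t : ℝ) (a : MonoidAlgebra ℝ G) : l1Norm (t • a) = |t| * l1Norm a := by
  simp [l1Norm, mul_sum, abs_mul]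

variable (G) in
noncomputable def uniform : MonoidAlgebra ℝ G :=
  ofCoeff (Finsupp.equivFunOnFinite.symm fun _ => (Fintype.card G : ℝ)⁻¹)

@[simp]
lemma coeff_uniform (g : G) : (uniform G).coeff g = (Fintype.card G : ℝ)⁻¹ := by
  simp [uniform]

end Fintype

section Group

variable {G : Type*} [Group G] [Fintype G]

lemma coeff_mul_eq_sum_left (a b : MonoidAlgebra ℝ G) (x : G) :
    (a * b).coeff x = ∑ y : G, a.coeff y * b.coeff (y⁻¹ * x) := by
  rw [coeff_mul_apply_left, Finsupp.sum_fintype _ _ (by simp)]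

lemma coeff_mul_eq_sum_right (a b : MonoidAlgebra ℝ G) (x : G) :
    (a * b).coeff x = ∑ y : G, a.coeff (x * y⁻¹) * b.coeff y := by
  rw [coeff_mul_apply_right, Finsupp.sum_fintype _ _ (by simp)]

lemma _root_.Fintype.sum_inv_mul_left {M : Type*} [AddCommMonoid M] (f : G → M) (y : G) :
    ∑ x : G, f (y⁻¹ * x) = ∑ x : G, f x :=
  Equiv.sum_comp (Equiv.mulLeft y⁻¹) f

lemma sum_coeff_mul (a b : MonoidAlgebra ℝ G) :
    ∑ x : G, (a * b).coeff x = (∑ x : G, a.coeff x) * ∑ x : G, b.coeff x :=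
  calc ∑ x : G, (a * b).coeff x = ∑ y : G, a.coeff y * ∑ x : G, b.coeff (y⁻¹ * x) := by
        simp only [coeff_mul_eq_sum_left, mul_sum]
        exact sum_comm
    _ = (∑ x : G, a.coeff x) * ∑ x : G, b.coeff x := by
        simp only [Fintype.sum_inv_mul_left b.coeff, sum_mul]

lemma l1Norm_mul_le (a b : MonoidAlgebra ℝ G) : l1Norm (a * b) ≤ l1Norm a * l1Norm b :=
  calc l1Norm (a * b) ≤ ∑ x : G, ∑ y : G, |a.coeff y| * |b.coeff (y⁻¹ * x)| := by
        simp only [l1Norm, coeff_mul_eq_sum_left, ← abs_mul]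
        exact sum_le_sum fun x _ => abs_sum_le_sum_abs _ _
    _ = ∑ y : G, |a.coeff y| * ∑ x : G, |b.coeff (y⁻¹ * x)| := by
        simp only [mul_sum]
        exact sum_comm
    _ = l1Norm a * l1Norm b := by
        simp only [Fintype.sum_inv_mul_left fun x => |b.coeff x|, l1Norm, sum_mul]

lemma isUnit_one_sub_of_l1Norm_lt_one {a : MonoidAlgebra ℝ G} (ha : l1Norm a < 1) :
    IsUnit (1 - a) := by
  refine IsArtinianRing.isUnit_iff_isLeftRegular.2
    (isLeftRegular_iff_right_eq_zero_of_mul.2 fun x hx => ?_)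
  have hfix : a * x = x := by rwa [sub_mul, one_mul, sub_eq_zero, eq_comm] at hx
  have hle := l1Norm_mul_le a x
  rw [hfix] at hle
  exact l1Norm_eq_zero.1 (by nlinarith [l1Norm_nonneg x])

lemma uniform_mul (a : MonoidAlgebra ℝ G) :
    uniform G * a = (∑ g : G, a.coeff g) • uniform G := by
  ext x
  simp [coeff_mul_eq_sum_right, ← mul_sum, mul_comm]

lemma mul_uniform (a : MonoidAlgebra ℝ G) :
    a * uniform G = (∑ g : G, a.coeff g) • uniform G := by
  ext x
  simp [coeff_mul_eq_sum_left, ← sum_mul]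

lemma l1Norm_mul_le_of_sum_coeff_eq_zero {μ a : MonoidAlgebra ℝ G} {m : ℝ}
    (hm : ∀ g, m ≤ μ.coeff g) (ha : ∑ g : G, a.coeff g = 0) :
    l1Norm (μ * a) ≤ (∑ g : G, μ.coeff g - Fintype.card G * m) * l1Norm a := by
  have hcoeff : Fintype.card G * m * (Fintype.card G : ℝ)⁻¹ = m := by
    field_simp [Nat.cast_ne_zero.2 Fintype.card_ne_zero]
  have hshift : μ * a = (μ - (Fintype.card G * m) • uniform G) * a := by
    rw [sub_mul, smul_mul_assoc, uniform_mul, ha, zero_smul, smul_zero, sub_zero]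
  have hnorm : l1Norm (μ - (Fintype.card G * m) • uniform G) =
      ∑ g : G, μ.coeff g - Fintype.card G * m := by
    simp only [l1Norm, coeff_sub, coeff_smul, Finsupp.coe_sub, Finsupp.coe_smul, Pi.sub_apply,
      Pi.smul_apply, coeff_uniform, smul_eq_mul, hcoeff,
      abs_of_nonneg (sub_nonneg.2 (hm _)), sum_sub_distrib, sum_const, card_univ, nsmul_eq_mul]
  rw [hshift, ← hnorm]
  exact l1Norm_mul_le _ _

lemma card_mul_l1Norm_le_of_eq_add_smul_mul {μ ν z : MonoidAlgebra ℝ G} {m t : ℝ}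
    (hm : ∀ g, m ≤ μ.coeff g) (hμ : ∑ g : G, μ.coeff g = 1) (hz₀ : ∑ g : G, z.coeff g = 0)
    (ht₀ : 0 ≤ t) (ht₁ : t ≤ 1) (hz : z = ν + t • (μ * z)) :
    Fintype.card G * m * l1Norm z ≤ l1Norm ν := by
  have hcard_m : Fintype.card G * m ≤ 1 := by
    simpa [hμ] using sum_le_sum fun g (_ : g ∈ univ) => hm g
  have hcontract : l1Norm (μ * z) ≤ (1 - Fintype.card G * m) * l1Norm z := by
    simpa [hμ] using l1Norm_mul_le_of_sum_coeff_eq_zero hm hz₀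
  have htriangle : l1Norm z ≤ l1Norm ν + t * l1Norm (μ * z) := by
    calc l1Norm z = l1Norm (ν + t • (μ * z)) := congrArg l1Norm hz
      _ ≤ l1Norm ν + t * l1Norm (μ * z) := by
        simpa [l1Norm_smul, abs_of_nonneg ht₀] using l1Norm_add_le ν (t • (μ * z))
  nlinarith [l1Norm_nonneg z, l1Norm_nonneg (μ * z)]

end Group

section CommGroup

variable {G : Type*} [CommGroup G] [Fintype G]

lemma Q_sub_uniform {μ : MonoidAlgebra ℝ G} {t : ℝ} (hunit : IsUnit (1 - t • μ))
    (hμ : ∑ g : G, μ.coeff g = 1) :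
    Q t μ - uniform G = (1 - t) • ((μ - uniform G) * Ring.inverse (1 - t • μ)) := by
  have hinv : (1 - t • μ) * Ring.inverse (1 - t • μ) = 1 := Ring.mul_inverse_cancel _ hunit
  have hu : uniform G * (1 - t • μ) = (1 - t) • uniform G := by
    rw [mul_sub, mul_one, mul_smul_comm, uniform_mul, hμ, one_smul, sub_smul, one_smul]
  have hu_inv : (1 - t) • (uniform G * Ring.inverse (1 - t • μ)) = uniform G := by
    rw [← smul_mul_assoc, ← hu, mul_assoc, hinv, mul_one]
  rw [Q, sub_mul, smul_sub, hu_inv]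

lemma l1Norm_Q_sub_uniform_le {μ : MonoidAlgebra ℝ G} {m t : ℝ} (hm : ∀ g, m ≤ μ.coeff g)
    (hm₀ : 0 < m) (hμ : ∑ g : G, μ.coeff g = 1) (ht₀ : 0 ≤ t) (ht₁ : t < 1) :
    l1Norm (Q t μ - uniform G) ≤ (1 - t) * (l1Norm (μ - uniform G) / (Fintype.card G * m)) := by
  have hμ_norm : l1Norm μ = 1 := by
    rw [l1Norm, ← hμ]
    exact sum_congr rfl fun g _ => abs_of_nonneg (hm₀.le.trans (hm g))
  have hunit : IsUnit (1 - t • μ) := isUnit_one_sub_of_l1Norm_lt_one <| by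
    rwa [l1Norm_smul, hμ_norm, mul_one, abs_of_nonneg ht₀]
  set z := (μ - uniform G) * Ring.inverse (1 - t • μ) with hz_def
  have hz : z = (μ - uniform G) + t • (μ * z) := by
    rw [← sub_eq_iff_eq_add, ← smul_mul_assoc, ← one_sub_mul, hz_def, mul_left_comm,
      Ring.mul_inverse_cancel _ hunit, mul_one]
  have hz₀ : ∑ g : G, z.coeff g = 0 := by
    simp [hz_def, sum_coeff_mul, sum_sub_distrib, hμ]
  have hbound := card_mul_l1Norm_le_of_eq_add_smul_mul hm hμ hz₀ ht₀ ht₁.le hz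
  have hcard_m : 0 < Fintype.card G * m := mul_pos (Nat.cast_pos.2 Fintype.card_pos) hm₀
  rw [Q_sub_uniform hunit hμ, ← hz_def, l1Norm_smul, abs_of_pos (sub_pos.2 ht₁)]
  exact mul_le_mul_of_nonneg_left ((le_div_iff₀' hcard_m).2 hbound) (sub_nonneg.2 ht₁.le)

end CommGroup

end MonoidAlgebra

open MonoidAlgebra

/-- Let `G` be a finite (abelian) group and `μ ∈ P(G)` with `μ(g) > 0` for
every `g`. Then, as `t → 1⁻`, `Q_t(μ)` converges (coefficientwise, which is convergence in the
finite-dimensional space `ℝ[G]`) to the uniform probability measure `(1/|G|) Σ_g δ_g`, the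
main attractor of the rational semigroup. -/
theorem Qt_tendsto_uniform {G : Type*} [CommGroup G] [Fintype G]
    (μ : MonoidAlgebra ℝ G) (hpos : ∀ g : G, 0 < μ.coeff g) (hsum : ∑ g : G, μ.coeff g = 1) :
    ∀ x : G, Tendsto (fun t : ℝ => (Q t μ).coeff x) (nhdsWithin 1 (Set.Iio 1))
      (nhds ((Fintype.card G : ℝ)⁻¹)) := by
  intro x
  obtain ⟨g₀, hg₀⟩ := Finite.exists_min μ.coeff
  set C := l1Norm (μ - uniform G) / (Fintype.card G * μ.coeff g₀)
  have hlim : Tendsto (fun t : ℝ => (1 - t) * C) (nhdsWithin 1 (Set.Iio 1)) (nhds 0) :=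
    ((continuous_const.sub continuous_id).mul continuous_const).tendsto' 1 0 (by simp)
      |>.mono_left nhdsWithin_le_nhds
  rw [tendsto_iff_norm_sub_tendsto_zero]
  refine squeeze_zero' (Eventually.of_forall fun _ => norm_nonneg _) ?_ hlim
  filter_upwards [Ioo_mem_nhdsLT zero_lt_one] with t ht
  calc ‖(Q t μ).coeff x - (Fintype.card G : ℝ)⁻¹‖ = |(Q t μ - uniform G).coeff x| := by simp
    _ ≤ l1Norm (Q t μ - uniform G) := abs_coeff_le_l1Norm _ _
    _ ≤ (1 - t) * C := l1Norm_Q_sub_uniform_le hg₀ (hpos g₀) hsum ht.1.le ht.2
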